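/- Let 4 ≤ p ≤ 6, 0 < δ₁ ≤ 1/2 + 3/p and 0 < δ₂ ≤ 1. Let τ be a sequence in T(δ₁, δ₂) and define the sequence γ by γ_n = min(n − 1/2 + 3/p, τ_n) for all n ≥ 0. Then γ is a sequence in T(δ₁, δ₂) and E_p(τ) ≤ E_p(γ). -/

import Mathlib

open MeasureTheory Real Set

/-- The kernel `K_p(τ; x)`. -/
noncomputable def Kp (p : ℝ) (τ : ℕ → ℝ) (x : ℝ) : ℝ :=
  ∑' n : ℕ, (Set.Ioo (τ n) (τ (n + 1))).indicator
    (fun y => Real.sin (p / 2 * π * (y - n)) / (π * y)) x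

/-- The quantity `E_p(τ)`. -/
noncomputable def Ep (p : ℝ) (τ : ℕ → ℝ) : ℝ :=
  ∫ x in Set.Ioi (0 : ℝ), (max 0 (Kp p τ x)) ^ 2

/-- The set of sequences `T(δ₁, δ₂)`. -/
def Tset (δ₁ δ₂ : ℝ) : Set (ℕ → ℝ) :=
  {τ | τ 0 = 0 ∧ StrictMono τ ∧ δ₁ ≤ τ 1 ∧ ∀ n, 1 ≤ n → δ₂ ≤ τ (n + 1) - τ n}

/-- The supremum `ℰ_p(δ₁, δ₂) = sup_{τ ∈ T(δ₁,δ₂)} E_p(τ)`. -/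
noncomputable def Esup (p δ₁ δ₂ : ℝ) : ℝ := sSup (Ep p '' Tset δ₁ δ₂)

/-!
Write `ψ t = max(0, sin t)²` and `c_n = n - 1/2 + 3/p`. On `(τ_n, τ_{n+1})` the integrand of
`E_p(τ)` is the `n`-th branch `ψ(pπ(x - n)/2) / (πx)²`. Lowering `τ_{k+1}` to `γ_{k+1}` replaces
branch `k` by branch `k + 1` exactly on `(c_{k+1}, τ_{k+1})`, and every point sees only finitely
many such switches, so by dominated convergence `E_p(γ) - E_p(τ)` is the sum over `k` of the
integrals of the difference of consecutive branches over these intervals. Each of them is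
nonnegative: in the variable `θ = pπ(x - k - 1)/2` the numerator is `ψ(θ) - ψ(θ + a)` with
`a = pπ/2 ∈ [2π, 3π]`, whose integral from `θ = 3π/2 - a/2` to any endpoint is nonnegative
because the window of length `a` centred at `3π/2` carries the most mass of `ψ`; integrating by
parts against the decreasing weight `(πx)⁻²` preserves the sign.
-/

open Filter Topology

lemma intervalIntegral_sub_comp_add_right {f : ℝ → ℝ} (hf : Continuous f) (a u v : ℝ) :
    ∫ t in u..v, (f t - f (t + a)) = (∫ t in u..u + a, f t) - ∫ t in v..v + a, f t := by
  have hint : ∀ b c : ℝ, IntervalIntegrable f volume b c := hf.intervalIntegrable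
  have hint' : IntervalIntegrable (fun t => f (t + a)) volume u v :=
    (hf.comp (continuous_add_const a)).intervalIntegrable u v
  rw [intervalIntegral.integral_sub (hint u v) hint', intervalIntegral.integral_comp_add_right,
    intervalIntegral.integral_interval_sub_interval_comm (hint _ _) (hint _ _) (hint _ _)]

lemma integral_mul_nonneg_of_deriv_nonpos {φ w w' : ℝ → ℝ} {c T : ℝ} (hcT : c ≤ T)
    (hφ : Continuous φ) (hw : ∀ x ∈ Icc c T, HasDerivAt w (w' x) x)
    (hw' : IntervalIntegrable w' volume c T) (hw'_nonpos : ∀ x ∈ Icc c T, w' x ≤ 0)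
    (hwT : 0 ≤ w T) (hΦ : ∀ Y ∈ Icc c T, 0 ≤ ∫ x in c..Y, φ x) :
    0 ≤ ∫ x in c..T, φ x * w x := by
  rw [← uIcc_of_le hcT] at hw
  have hparts := intervalIntegral.integral_mul_deriv_eq_deriv_mul
    (fun y _ => (hφ.integral_hasStrictDerivAt c y).hasDerivAt) hw
    (hφ.intervalIntegrable c T) hw'
  have hΦw' : ∫ x in c..T, (∫ t in c..x, φ t) * w' x ≤ 0 := by
    rw [← neg_nonneg, ← intervalIntegral.integral_neg]
    refine intervalIntegral.integral_nonneg hcT fun x hx => ?_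
    exact neg_nonneg.2 (mul_nonpos_of_nonneg_of_nonpos (hΦ x hx) (hw'_nonpos x hx))
  rw [intervalIntegral.integral_same, zero_mul, sub_zero] at hparts
  nlinarith [mul_nonneg (hΦ T ⟨hcT, le_rfl⟩) hwT]

noncomputable def sinPosSq (t : ℝ) : ℝ := (max 0 (sin t)) ^ 2

@[fun_prop]
lemma continuous_sinPosSq : Continuous sinPosSq := by
  unfold sinPosSq; fun_prop

lemma sinPosSq_periodic : Function.Periodic sinPosSq (2 * π) := fun x => by
  simp [sinPosSq, sin_add_two_pi]

lemma sinPosSq_pi_sub (t : ℝ) : sinPosSq (π - t) = sinPosSq t := by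
  simp [sinPosSq, sin_pi_sub]

lemma sinPosSq_sub_le_add {m s : ℝ} (hm₁ : -(π / 2) ≤ m) (hm₂ : m ≤ π / 2) (hs₀ : 0 ≤ s)
    (hsπ : s ≤ π) : sinPosSq (m - s) ≤ sinPosSq (m + s) := by
  have hsin : sin (m - s) ≤ sin (m + s) := by
    have := mul_nonneg (cos_nonneg_of_mem_Icc ⟨hm₁, hm₂⟩) (sin_nonneg_of_nonneg_of_le_pi hs₀ hsπ)
    rw [sin_add, sin_sub]; linarith
  exact pow_le_pow_left₀ (le_max_left _ _) (max_le_max_left 0 hsin) 2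

/-- Since `s ↦ ψ (m + s) - ψ (m - s)` is odd about `π`, its integral over `[π, S]` cancels
that over `[2π - S, π]`. -/
lemma integral_sinPosSq_add_sub_sub_nonneg {m S : ℝ} (hm₁ : -(π / 2) ≤ m) (hm₂ : m ≤ π / 2)
    (hS₀ : 0 ≤ S) (hS : S ≤ 2 * π) :
    0 ≤ ∫ s in (0 : ℝ)..S, (sinPosSq (m + s) - sinPosSq (m - s)) := by
  set h : ℝ → ℝ := fun s => sinPosSq (m + s) - sinPosSq (m - s)
  have hcont : Continuous h := by unfold h; fun_prop
  have hpos : ∀ S' ∈ Icc 0 π, 0 ≤ ∫ s in (0 : ℝ)..S', h s := fun S' hS' =>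
    intervalIntegral.integral_nonneg hS'.1 fun s hs =>
      sub_nonneg.2 (sinPosSq_sub_le_add hm₁ hm₂ hs.1 (hs.2.trans hS'.2))
  rcases le_or_gt S π with hSπ | hπS
  · exact hpos S ⟨hS₀, hSπ⟩
  have hodd : ∀ s, h (2 * π - s) = -h s := fun s => by
    simp only [h, show m + (2 * π - s) = m - s + 2 * π by ring,
      show m - (2 * π - s) = m + s - 2 * π by ring, sinPosSq_periodic _, sinPosSq_periodic.sub_eq]
    ring
  have hcancel : ∫ s in (2 * π - S)..S, h s = 0 := by
    have := intervalIntegral.integral_comp_sub_left h (2 * π) (a := 2 * π - S) (b := S)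
    simp only [hodd, intervalIntegral.integral_neg, sub_sub_cancel] at this
    linarith
  rw [← intervalIntegral.integral_add_adjacent_intervals (hcont.intervalIntegrable 0 (2 * π - S))
    (hcont.intervalIntegrable _ _), hcancel, add_zero]
  exact hpos _ ⟨by linarith, by linarith⟩

lemma integral_sinPosSq_le_centered {L : ℝ} (hL₀ : 0 ≤ L) (hLπ : L ≤ π) (Y : ℝ) :
    ∫ t in Y..Y + L, sinPosSq t ≤ ∫ t in (π - L) / 2..(π - L) / 2 + L, sinPosSq t := by
  set m := (π - L) / 2 with hm
  set Y' := toIcoMod two_pi_pos (m - 2 * π) Y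
  have hY' : Y' ∈ Ico (m - 2 * π) m := by
    simpa only [sub_add_cancel] using toIcoMod_mem_Ico two_pi_pos (m - 2 * π) Y
  have hshift : ∫ t in Y..Y + L, sinPosSq t = ∫ t in Y'..Y' + L, sinPosSq t := by
    have hY := toIcoMod_add_toIcoDiv_zsmul two_pi_pos (m - 2 * π) Y
    have := intervalIntegral.integral_comp_add_right sinPosSq
      (toIcoDiv two_pi_pos (m - 2 * π) Y • (2 * π)) (a := Y') (b := Y' + L)
    rw [add_right_comm, hY] at this
    simpa only [(sinPosSq_periodic.zsmul _) _] using this.symm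
  have hreflect : ∫ t in Y'..m, (sinPosSq (t + L) - sinPosSq t)
      = ∫ s in (0 : ℝ)..m - Y', (sinPosSq (m + s) - sinPosSq (m - s)) := by
    have := intervalIntegral.integral_comp_sub_left
      (fun t => sinPosSq (t + L) - sinPosSq t) m (a := 0) (b := m - Y')
    simp only [sub_sub_cancel, sub_zero] at this
    rw [← this]
    refine intervalIntegral.integral_congr fun s _ => ?_
    simp only [show m - s + L = π - (m + s) by ring, sinPosSq_pi_sub]
  have hnonneg := integral_sinPosSq_add_sub_sub_nonneg (m := m) (S := m - Y') (by linarith)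
    (by linarith) (by linarith [hY'.2]) (by linarith [hY'.1])
  have hdiff := intervalIntegral_sub_comp_add_right continuous_sinPosSq L Y' m
  rw [← neg_neg (∫ t in Y'..m, _), ← intervalIntegral.integral_neg] at hdiff
  simp only [neg_sub, hreflect] at hdiff
  linarith

/-- A window of length `a ∈ [2π, 3π]` is a full period plus a window of length `a - 2π ≤ π`. -/
lemma integral_sinPosSq_sub_comp_add_nonneg {a : ℝ} (ha₁ : 2 * π ≤ a) (ha₂ : a ≤ 3 * π) (Y : ℝ) :
    0 ≤ ∫ t in 3 * π / 2 - a / 2..Y, (sinPosSq t - sinPosSq (t + a)) := by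
  have hint : ∀ u v : ℝ, IntervalIntegrable sinPosSq volume u v :=
    continuous_sinPosSq.intervalIntegrable
  have hperiod : ∀ Z, ∫ t in Z..Z + a, sinPosSq t
      = (∫ t in Z..Z + (a - 2 * π), sinPosSq t) + ∫ t in (0 : ℝ)..0 + 2 * π, sinPosSq t := by
    intro Z
    rw [← sinPosSq_periodic.intervalIntegral_add_eq Z 0,
      ← sinPosSq_periodic.intervalIntegral_add_eq_add Z _ hint, add_assoc, sub_add_cancel]
  have hcentered := integral_sinPosSq_le_centered (L := a - 2 * π) (by linarith) (by linarith) Y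
  rw [show (π - (a - 2 * π)) / 2 = 3 * π / 2 - a / 2 by ring] at hcentered
  rw [intervalIntegral_sub_comp_add_right continuous_sinPosSq, hperiod, hperiod]
  linarith

lemma integral_sinPosSq_scaled_sub_nonneg {p : ℝ} (hp4 : 4 ≤ p) (hp6 : p ≤ 6) (b T : ℝ) :
    0 ≤ ∫ x in b - 1 / 2 + 3 / p..T,
      (sinPosSq (p / 2 * π * (x - b)) - sinPosSq (p / 2 * π * (x - b) + p / 2 * π)) := by
  have hp : 0 < p := by linarith
  set a := p / 2 * π with ha
  have ha0 : a ≠ 0 := by positivity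
  have key := intervalIntegral.integral_comp_mul_sub (a := b - 1 / 2 + 3 / p) (b := T)
    (fun t => sinPosSq t - sinPosSq (t + a)) ha0 (a * b)
  rw [show a * (b - 1 / 2 + 3 / p) - a * b = 3 * π / 2 - a / 2 by rw [ha]; field_simp; ring] at key
  simp only [mul_sub] at key ⊢
  rw [key]
  refine smul_nonneg (inv_nonneg.2 (by positivity)) (integral_sinPosSq_sub_comp_add_nonneg ?_ ?_ _)
  · rw [ha]; nlinarith [pi_pos]
  · rw [ha]; nlinarith [pi_pos]

noncomputable def branchSq (p : ℝ) (n : ℕ) (x : ℝ) : ℝ :=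
  (max 0 (sin (p / 2 * π * (x - n)) / (π * x))) ^ 2

lemma branchSq_nonneg (p : ℝ) (n : ℕ) (x : ℝ) : 0 ≤ branchSq p n x := sq_nonneg _

@[fun_prop]
lemma measurable_branchSq (p : ℝ) (n : ℕ) : Measurable (branchSq p n) := by
  unfold branchSq; fun_prop

lemma branchSq_le (p : ℝ) (n : ℕ) {x : ℝ} (hx : 0 < x) : branchSq p n x ≤ 1 / (π * x) ^ 2 := by
  have hπx : 0 < π * x := by positivity
  rw [branchSq, one_div, ← inv_pow]
  refine pow_le_pow_left₀ (le_max_left _ _) (max_le (by positivity) ?_) 2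
  rw [div_eq_mul_inv]
  exact mul_le_of_le_one_left (by positivity) (sin_le_one _)

lemma abs_branchSq_sub_le (p : ℝ) (m n : ℕ) {x : ℝ} (hx : 0 < x) :
    |branchSq p m x - branchSq p n x| ≤ 1 / (π * x) ^ 2 :=
  abs_sub_le_of_nonneg_of_le (branchSq_nonneg p m x) (branchSq_le p m hx)
    (branchSq_nonneg p n x) (branchSq_le p n hx)

lemma branchSq_eq (p : ℝ) (n : ℕ) {x : ℝ} (hx : 0 < x) :
    branchSq p n x = sinPosSq (p / 2 * π * (x - n)) / (π * x) ^ 2 := by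
  rw [branchSq, sinPosSq, ← div_pow, ← max_div_div_right (by positivity), zero_div]

lemma one_le_breakpoint {p : ℝ} (hp : 0 < p) (hp6 : p ≤ 6) (n : ℕ) :
    1 ≤ (↑(n + 1) : ℝ) - 1 / 2 + 3 / p := by
  have : 1 / 2 ≤ 3 / p := by rw [div_le_div_iff₀ two_pos hp]; linarith
  push_cast
  linarith [(n.cast_nonneg : (0 : ℝ) ≤ n)]

lemma hasDerivAt_inv_sq_pi_mul {x : ℝ} (hx : x ≠ 0) :
    HasDerivAt (fun x => ((π * x) ^ 2)⁻¹) (-(2 * π ^ 2 * x / (π * x) ^ 4)) x := by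
  refine ((((hasDerivAt_id' x).const_mul π).fun_pow 2).fun_inv
    (pow_ne_zero 2 (by positivity))).congr_deriv ?_
  field_simp
  ring

lemma setIntegral_branchSq_succ_sub_nonneg {p : ℝ} (hp4 : 4 ≤ p) (hp6 : p ≤ 6) (n : ℕ) (T : ℝ) :
    0 ≤ ∫ x in Ioo ((↑(n + 1) : ℝ) - 1 / 2 + 3 / p) T,
      (branchSq p (n + 1) x - branchSq p n x) := by
  set c : ℝ := ↑(n + 1) - 1 / 2 + 3 / p
  have hc1 : 1 ≤ c := one_le_breakpoint (by linarith) hp6 n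
  rcases le_or_gt T c with hTc | hcT
  · simp [Ioo_eq_empty (not_lt.2 hTc)]
  rw [← integral_Ioc_eq_integral_Ioo, ← intervalIntegral.integral_of_le hcT.le]
  set b : ℝ := ↑(n + 1)
  have hEq : EqOn (fun x => branchSq p (n + 1) x - branchSq p n x)
      (fun x => (sinPosSq (p / 2 * π * (x - b)) - sinPosSq (p / 2 * π * (x - b) + p / 2 * π))
        * ((π * x) ^ 2)⁻¹) (uIcc c T) := by
    intro x hx
    have hx0 : 0 < x := by linarith [(uIcc_of_le hcT.le ▸ hx).1]
    simp only [branchSq_eq p _ hx0, b]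
    push_cast
    rw [show p / 2 * π * (x - (n + 1)) + p / 2 * π = p / 2 * π * (x - n) by ring]
    ring
  rw [intervalIntegral.integral_congr hEq]
  have hpos : ∀ x ∈ Icc c T, π * x ≠ 0 := fun x hx => by
    have : 0 < x := by linarith [hx.1]
    positivity
  refine integral_mul_nonneg_of_deriv_nonpos hcT.le (by fun_prop)
    (fun x hx => hasDerivAt_inv_sq_pi_mul (right_ne_zero_of_mul (hpos x hx))) ?_ ?_
    (inv_nonneg.2 (sq_nonneg _)) fun Y _ => integral_sinPosSq_scaled_sub_nonneg hp4 hp6 b Y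
  · refine ContinuousOn.intervalIntegrable ?_
    rw [uIcc_of_le hcT.le]
    exact (ContinuousOn.div (by fun_prop) (by fun_prop) fun x hx => pow_ne_zero 4 (hpos x hx)).neg
  · intro x hx
    have : 0 < x := by linarith [hx.1]
    exact neg_nonpos.2 (by positivity)

section Breakpoints

variable {β : Type*} [LinearOrder β] {σ : ℕ → β} {x : β} {N : ℕ}

lemma StrictMono.lt_apply_iff_of_mem_Ioo (hσ : StrictMono σ) (hx : x ∈ Ioo (σ N) (σ (N + 1)))
    (j : ℕ) : x < σ j ↔ N < j :=
  ⟨fun h => hσ.lt_iff_lt.1 (hx.1.trans h), fun h => hx.2.trans_le (hσ.monotone h)⟩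

lemma StrictMono.apply_lt_iff_of_mem_Ioo (hσ : StrictMono σ) (hx : x ∈ Ioo (σ N) (σ (N + 1)))
    (j : ℕ) : σ j < x ↔ j ≤ N :=
  ⟨fun h => Nat.lt_succ_iff.1 (hσ.lt_iff_lt.1 (h.trans hx.2)),
    fun h => (hσ.monotone h).trans_lt hx.1⟩

lemma StrictMono.eq_of_mem_Ioo (hσ : StrictMono σ) {n : ℕ} (hN : x ∈ Ioo (σ N) (σ (N + 1)))
    (hn : x ∈ Ioo (σ n) (σ (n + 1))) : n = N :=
  le_antisymm ((hσ.apply_lt_iff_of_mem_Ioo hN n).1 hn.1)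
    (Nat.lt_succ_iff.1 ((hσ.lt_apply_iff_of_mem_Ioo hN _).1 hn.2))

lemma StrictMono.exists_mem_Ioo (hσ : StrictMono σ) (htop : Tendsto σ atTop atTop)
    (hx : σ 0 < x) (hnr : x ∉ range σ) : ∃ n, x ∈ Ioo (σ n) (σ (n + 1)) := by
  obtain ⟨n, h₁, h₂⟩ := hσ.exists_between_of_tendsto_atTop htop hx
  exact ⟨n, h₁, h₂.lt_of_ne fun h => hnr ⟨n + 1, h.symm⟩⟩

/-- Lowering the breakpoints from `τ` to `σ` moves `x` from piece `N` to piece `M`,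
one piece at a time. -/
lemma sum_ite_mem_Ioo_eq_sub {G : Type*} [AddCommGroup G] {τ : ℕ → β} {M : ℕ}
    (hσ : StrictMono σ) (hτ : StrictMono τ) (hN : x ∈ Ioo (τ N) (τ (N + 1)))
    (hM : x ∈ Ioo (σ M) (σ (M + 1))) (f : ℕ → G) (n : ℕ) :
    ∑ k ∈ Finset.range n, (if x ∈ Ioo (σ (k + 1)) (τ (k + 1)) then f (k + 1) - f k else 0)
      = f (max N (min n M)) - f N := by
  have hterm : ∀ k, (if x ∈ Ioo (σ (k + 1)) (τ (k + 1)) then f (k + 1) - f k else 0)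
      = f (max N (min (k + 1) M)) - f (max N (min k M)) := by
    intro k
    have hiff : x ∈ Ioo (σ (k + 1)) (τ (k + 1)) ↔ k + 1 ≤ M ∧ N < k + 1 :=
      and_congr (hσ.apply_lt_iff_of_mem_Ioo hM _) (hτ.lt_apply_iff_of_mem_Ioo hN _)
    split_ifs with h <;> rw [hiff] at h
    · rw [show max N (min (k + 1) M) = k + 1 by omega, show max N (min k M) = k by omega]
    · rw [show max N (min (k + 1) M) = max N (min k M) by omega, sub_self]
  rw [Finset.sum_congr rfl fun k _ => hterm k,
    Finset.sum_range_sub (fun k => f (max N (min k M))), Nat.zero_min, Nat.max_zero]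

end Breakpoints

section Kernel

variable {p : ℝ} {σ : ℕ → ℝ} {x : ℝ}

lemma Kp_eq_of_mem_Ioo (hσ : StrictMono σ) {n : ℕ} (hx : x ∈ Ioo (σ n) (σ (n + 1))) :
    Kp p σ x = sin (p / 2 * π * (x - n)) / (π * x) := by
  rw [Kp, tsum_eq_single n fun m hm => indicator_of_notMem (fun h => hm (hσ.eq_of_mem_Ioo hx h)) _]
  exact indicator_of_mem hx _

lemma Kp_eq_zero_of_forall_notMem (h : ∀ n, x ∉ Ioo (σ n) (σ (n + 1))) : Kp p σ x = 0 := by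
  simp [Kp, indicator_of_notMem (h _)]

lemma sq_posPart_Kp_eq_branchSq (hσ : StrictMono σ) {n : ℕ} (hx : x ∈ Ioo (σ n) (σ (n + 1))) :
    (max 0 (Kp p σ x)) ^ 2 = branchSq p n x := by
  rw [Kp_eq_of_mem_Ioo hσ hx, branchSq]

lemma measurable_Kp (hσ : StrictMono σ) : Measurable (Kp p σ) := by
  set F : ℕ → ℝ → ℝ := fun n => (Ioo (σ n) (σ (n + 1))).indicator
    (fun y => sin (p / 2 * π * (y - n)) / (π * y))
  have hF : ∀ n, Measurable (F n) := fun n => Measurable.indicator (by fun_prop) measurableSet_Ioo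
  refine measurable_of_tendsto_metrizable (f := fun n x => ∑ k ∈ Finset.range n, F k x)
    (fun n => Finset.measurable_sum _ fun k _ => hF k) (tendsto_pi_nhds.2 fun x => ?_)
  have hsupp : (Function.support fun n => F n x).Subsingleton := fun m hm n hn =>
    (hσ.eq_of_mem_Ioo (mem_of_indicator_ne_zero hm) (mem_of_indicator_ne_zero hn)).symm
  exact (summable_of_hasFiniteSupport hsupp.finite).hasSum.tendsto_sum_nat

lemma sq_posPart_Kp_le (hσ : StrictMono σ) (hx : 0 < x) :
    (max 0 (Kp p σ x)) ^ 2 ≤ 1 / (π * x) ^ 2 := by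
  by_cases h : ∃ n, x ∈ Ioo (σ n) (σ (n + 1))
  · obtain ⟨n, hn⟩ := h
    exact sq_posPart_Kp_eq_branchSq hσ hn ▸ branchSq_le p n hx
  · rw [Kp_eq_zero_of_forall_notMem (not_exists.1 h), max_self, zero_pow two_ne_zero]
    positivity

lemma branchSq_zero_le (p : ℝ) (hx : 0 < x) : branchSq p 0 x ≤ (p / 2) ^ 2 := by
  have hπx : 0 < π * x := by positivity
  rw [branchSq, ← sq_abs (p / 2)]
  refine pow_le_pow_left₀ (le_max_left _ _) (max_le (abs_nonneg _) ?_) 2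
  rw [div_le_iff₀ hπx, Nat.cast_zero, sub_zero]
  calc sin (p / 2 * π * x) ≤ |p / 2 * π * x| := (le_abs_self _).trans abs_sin_le_abs
    _ = |p / 2| * (π * x) := by rw [mul_assoc, abs_mul, abs_of_pos hπx]

lemma integrableOn_Ioi_one_div_sq : IntegrableOn (fun x : ℝ => 1 / (π * x) ^ 2) (Ioi 1) := by
  refine IntegrableOn.congr_fun ((integrableOn_Ioi_rpow_of_lt (by norm_num : (-2 : ℝ) < -1)
    one_pos).const_mul (π ^ 2)⁻¹) (fun x hx => ?_) measurableSet_Ioi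
  rw [rpow_neg (zero_le_one.trans (le_of_lt hx)), show (2 : ℝ) = (2 : ℕ) by norm_num, rpow_natCast]
  ring

lemma integrableOn_sq_posPart_Kp (hσ0 : σ 0 = 0) (hσ : StrictMono σ) :
    IntegrableOn (fun x => (max 0 (Kp p σ x)) ^ 2) (Ioi 0) := by
  have hmeas : AEStronglyMeasurable (fun x => (max 0 (Kp p σ x)) ^ 2) volume :=
    ((measurable_const.max (measurable_Kp hσ)).pow_const 2).aestronglyMeasurable
  have hσ1 : 0 < σ 1 := hσ0 ▸ hσ zero_lt_one
  have hnear : IntegrableOn (fun x => (max 0 (Kp p σ x)) ^ 2) (Ioc 0 1) := by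
    refine Measure.integrableOn_of_bounded (M := (p / 2) ^ 2 + 1 / (π * σ 1) ^ 2)
      measure_Ioc_lt_top.ne hmeas ((ae_restrict_iff' measurableSet_Ioc).2 (ae_of_all _ ?_))
    intro x hx
    rw [Real.norm_of_nonneg (sq_nonneg _)]
    rcases lt_or_ge x (σ 1) with hx1 | hx1
    · rw [sq_posPart_Kp_eq_branchSq hσ (n := 0) ⟨hσ0 ▸ hx.1, hx1⟩]
      linarith [branchSq_zero_le p hx.1, one_div_nonneg.2 (sq_nonneg (π * σ 1))]
    · have : 1 / (π * x) ^ 2 ≤ 1 / (π * σ 1) ^ 2 := by gcongr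
      linarith [sq_posPart_Kp_le (p := p) hσ hx.1, sq_nonneg (p / 2)]
  have hfar : IntegrableOn (fun x => (max 0 (Kp p σ x)) ^ 2) (Ioi 1) := by
    refine integrableOn_Ioi_one_div_sq.mono' hmeas.restrict
      ((ae_restrict_iff' measurableSet_Ioi).2 (ae_of_all _ fun x hx => ?_))
    rw [Real.norm_of_nonneg (sq_nonneg _)]
    exact sq_posPart_Kp_le hσ (zero_lt_one.trans hx)
  rw [← Ioc_union_Ioi_eq_Ioi zero_le_one]
  exact hnear.union hfar

end Kernel

lemma Ioo_min_self {α : Type*} [LinearOrder α] (a b : α) : Ioo (min a b) b = Ioo a b := by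
  ext x
  simp only [mem_Ioo, min_lt_iff]
  exact ⟨fun ⟨h₁, h₂⟩ => ⟨h₁.resolve_right (not_lt.2 h₂.le), h₂⟩, fun ⟨h₁, h₂⟩ => ⟨Or.inl h₁, h₂⟩⟩

noncomputable def capSeq (p : ℝ) (τ : ℕ → ℝ) (n : ℕ) : ℝ := min ((n : ℝ) - 1 / 2 + 3 / p) (τ n)

section CapSeq

variable {p : ℝ} {τ : ℕ → ℝ}

lemma StrictMono.capSeq (hτ : StrictMono τ) : StrictMono (capSeq p τ) := fun a b h => by
  have : (a : ℝ) < b := by exact_mod_cast h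
  exact lt_min ((min_le_left _ _).trans_lt (by linarith)) ((min_le_right _ _).trans_lt (hτ h))

lemma capSeq_zero (hp : 0 < p) (hp6 : p ≤ 6) (hτ0 : τ 0 = 0) : capSeq p τ 0 = 0 := by
  have : 1 / 2 ≤ 3 / p := by rw [div_le_div_iff₀ two_pos hp]; linarith
  rw [capSeq, hτ0, Nat.cast_zero, min_eq_right (by linarith)]

lemma tendsto_capSeq (hτ : Tendsto τ atTop atTop) : Tendsto (capSeq p τ) atTop atTop :=
  tendsto_inf_atTop atTop (tendsto_atTop_add_const_right _ _
    (tendsto_atTop_add_const_right _ _ tendsto_natCast_atTop_atTop)) hτ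

lemma capSeq_mem_Tset {δ₁ δ₂ : ℝ} (hp : 0 < p) (hp6 : p ≤ 6) (hδ₁ : δ₁ ≤ 1 / 2 + 3 / p)
    (hδ₂ : δ₂ ≤ 1) (hτ : τ ∈ Tset δ₁ δ₂) : capSeq p τ ∈ Tset δ₁ δ₂ := by
  obtain ⟨hτ0, hτ, hτ1, hτgap⟩ := hτ
  refine ⟨capSeq_zero hp hp6 hτ0, hτ.capSeq, ?_, fun n hn => ?_⟩
  · exact le_min (by push_cast; linarith) hτ1
  · have hgap := hτgap n hn
    have h₁ := min_le_left ((n : ℝ) - 1 / 2 + 3 / p) (τ n)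
    have h₂ := min_le_right ((n : ℝ) - 1 / 2 + 3 / p) (τ n)
    have : capSeq p τ n + δ₂ ≤ capSeq p τ (n + 1) := by
      refine le_min ?_ (by rw [capSeq]; linarith)
      rw [capSeq]; push_cast; linarith
    linarith

lemma Tset.tendsto_atTop {δ₁ δ₂ : ℝ} (hδ₂ : 0 < δ₂) (hτ : τ ∈ Tset δ₁ δ₂) :
    Tendsto τ atTop atTop := by
  have hlin : ∀ n : ℕ, τ 1 + n * δ₂ ≤ τ (n + 1) := by
    intro n
    induction n with
    | zero => simp
    | succ n ih =>
      have := hτ.2.2.2 (n + 1) (Nat.le_add_left 1 n)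
      push_cast
      linarith
  rw [← tendsto_add_atTop_iff_nat 1]
  exact tendsto_atTop_mono hlin (tendsto_atTop_add_const_left _ _
    (tendsto_natCast_atTop_atTop.atTop_mul_const hδ₂))

end CapSeq

noncomputable def branchJump (p : ℝ) (τ : ℕ → ℝ) (k : ℕ) : ℝ → ℝ :=
  (Ioo ((↑(k + 1) : ℝ) - 1 / 2 + 3 / p) (τ (k + 1))).indicator
    fun x => branchSq p (k + 1) x - branchSq p k x

section BranchJump

variable {p : ℝ} {τ : ℕ → ℝ} {x : ℝ}

lemma measurable_branchJump (p : ℝ) (τ : ℕ → ℝ) (k : ℕ) : Measurable (branchJump p τ k) :=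
  Measurable.indicator (by fun_prop) measurableSet_Ioo

lemma branchJump_eq_zero_of_le_one (hp : 0 < p) (hp6 : p ≤ 6) (hx : x ≤ 1) (k : ℕ) :
    branchJump p τ k x = 0 :=
  indicator_of_notMem (fun h => by linarith [h.1, one_le_breakpoint hp hp6 k]) _

lemma abs_branchJump_le (hp : 0 < p) (hp6 : p ≤ 6) (k : ℕ) (x : ℝ) :
    |branchJump p τ k x| ≤ (Ioi 1).indicator (fun y => 1 / (π * y) ^ 2) x := by
  rcases le_or_gt x 1 with hx | hx
  · rw [branchJump_eq_zero_of_le_one hp hp6 hx, abs_zero, indicator_of_notMem (notMem_Ioi.2 hx)]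
  rw [indicator_of_mem (mem_Ioi.2 hx), branchJump, indicator_apply]
  split_ifs
  · exact abs_branchSq_sub_le p _ _ (zero_lt_one.trans hx)
  · rw [abs_zero]; positivity

lemma integrable_branchJump (hp : 0 < p) (hp6 : p ≤ 6) (k : ℕ) : Integrable (branchJump p τ k) :=
  (integrableOn_Ioi_one_div_sq.integrable_indicator measurableSet_Ioi).mono'
    (measurable_branchJump p τ k).aestronglyMeasurable (ae_of_all _ (abs_branchJump_le hp hp6 k))

lemma integral_branchJump_nonneg (hp4 : 4 ≤ p) (hp6 : p ≤ 6) (k : ℕ) :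
    0 ≤ ∫ x in Ioi 0, branchJump p τ k x := by
  have hsub : Ioo ((↑(k + 1) : ℝ) - 1 / 2 + 3 / p) (τ (k + 1)) ⊆ Ioi 0 := fun y hy =>
    zero_lt_one.trans_le ((one_le_breakpoint (by linarith) hp6 k).trans hy.1.le)
  rw [branchJump, integral_indicator measurableSet_Ioo, Measure.restrict_restrict measurableSet_Ioo,
    inter_eq_self_of_subset_left hsub]
  exact setIntegral_branchSq_succ_sub_nonneg hp4 hp6 k _

variable {N M : ℕ}

lemma sum_branchJump_eq (hτ : StrictMono τ) (hN : x ∈ Ioo (τ N) (τ (N + 1)))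
    (hM : x ∈ Ioo (capSeq p τ M) (capSeq p τ (M + 1))) (n : ℕ) :
    ∑ k ∈ Finset.range n, branchJump p τ k x = branchSq p (max N (min n M)) x - branchSq p N x := by
  rw [← sum_ite_mem_Ioo_eq_sub hτ.capSeq hτ hN hM (fun k => branchSq p k x)]
  refine Finset.sum_congr rfl fun k _ => ?_
  simp only [branchJump, indicator_apply, capSeq, Ioo_min_self]

lemma abs_sum_branchJump_le (hp : 0 < p) (hp6 : p ≤ 6) (hτ : StrictMono τ)
    (hN : x ∈ Ioo (τ N) (τ (N + 1))) (hM : x ∈ Ioo (capSeq p τ M) (capSeq p τ (M + 1))) (n : ℕ) :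
    |∑ k ∈ Finset.range n, branchJump p τ k x| ≤ (Ioi 1).indicator (fun y => 1 / (π * y) ^ 2) x := by
  rcases le_or_gt x 1 with hx | hx
  · simp only [branchJump_eq_zero_of_le_one hp hp6 hx, Finset.sum_const_zero, abs_zero,
      indicator_of_notMem (notMem_Ioi.2 hx), le_refl]
  rw [indicator_of_mem (mem_Ioi.2 hx), sum_branchJump_eq hτ hN hM]
  exact abs_branchSq_sub_le p _ _ (zero_lt_one.trans hx)

lemma tendsto_sum_branchJump (hτ : StrictMono τ) (hN : x ∈ Ioo (τ N) (τ (N + 1)))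
    (hM : x ∈ Ioo (capSeq p τ M) (capSeq p τ (M + 1))) :
    Tendsto (fun n => ∑ k ∈ Finset.range n, branchJump p τ k x) atTop
      (𝓝 ((max 0 (Kp p (capSeq p τ) x)) ^ 2 - (max 0 (Kp p τ x)) ^ 2)) := by
  have hNM : N ≤ M := Nat.lt_succ_iff.1 <| hτ.lt_iff_lt.1 <|
    hN.1.trans (hM.2.trans_le (min_le_right _ _))
  rw [sq_posPart_Kp_eq_branchSq hτ.capSeq hM, sq_posPart_Kp_eq_branchSq hτ hN]
  refine tendsto_atTop_of_eventually_const (i₀ := M) fun n hn => ?_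
  rw [sum_branchJump_eq hτ hN hM, show max N (min n M) = M by omega]

end BranchJump

theorem Ep_le_Ep_capSeq {p : ℝ} (hp4 : 4 ≤ p) (hp6 : p ≤ 6) {τ : ℕ → ℝ} (hτ0 : τ 0 = 0)
    (hτ : StrictMono τ) (hτtop : Tendsto τ atTop atTop) : Ep p τ ≤ Ep p (capSeq p τ) := by
  have hp : 0 < p := by linarith
  have hγ0 := capSeq_zero hp hp6 hτ0
  have hpieces : ∀ᵐ x ∂volume.restrict (Ioi 0), ∃ N M, x ∈ Ioo (τ N) (τ (N + 1)) ∧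
      x ∈ Ioo (capSeq p τ M) (capSeq p τ (M + 1)) := by
    filter_upwards [ae_restrict_mem measurableSet_Ioi, ae_restrict_of_ae
      (((countable_range τ).union (countable_range (capSeq p τ))).ae_notMem volume)] with x hx hnr
    obtain ⟨N, hN⟩ := hτ.exists_mem_Ioo hτtop (hτ0 ▸ hx) fun h => hnr (Or.inl h)
    obtain ⟨M, hM⟩ := hτ.capSeq.exists_mem_Ioo (tendsto_capSeq hτtop) (hγ0 ▸ hx)
      fun h => hnr (Or.inr h)
    exact ⟨N, M, hN, hM⟩
  have hlim := tendsto_integral_of_dominated_convergence _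
    (fun n => (Finset.measurable_sum _ fun k _ =>
      measurable_branchJump p τ k).aestronglyMeasurable)
    (integrableOn_Ioi_one_div_sq.integrable_indicator measurableSet_Ioi).integrableOn
    (fun n => hpieces.mono fun x ⟨N, M, hN, hM⟩ => abs_sum_branchJump_le hp hp6 hτ hN hM n)
    (hpieces.mono fun x ⟨N, M, hN, hM⟩ => tendsto_sum_branchJump hτ hN hM)
  have hpartial : ∀ n, 0 ≤ ∫ x in Ioi 0, ∑ k ∈ Finset.range n, branchJump p τ k x := fun n => by
    rw [integral_finsetSum _ fun k _ => (integrable_branchJump hp hp6 k).integrableOn]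
    exact Finset.sum_nonneg fun k _ => integral_branchJump_nonneg hp4 hp6 k
  have := ge_of_tendsto' hlim hpartial
  rw [integral_sub (integrableOn_sq_posPart_Kp hγ0 hτ.capSeq) (integrableOn_sq_posPart_Kp hτ0 hτ)]
    at this
  exact sub_nonneg.1 this

theorem stmt16_general (p δ₁ δ₂ : ℝ) (hp4 : 4 ≤ p) (hp6 : p ≤ 6)
    (hδ1' : δ₁ ≤ 1 / 2 + 3 / p) (hδ2 : 0 < δ₂) (hδ2' : δ₂ ≤ 1)
    (τ : ℕ → ℝ) (hτ : τ ∈ Tset δ₁ δ₂)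
    (γ : ℕ → ℝ) (hγ : ∀ n : ℕ, γ n = min ((n : ℝ) - 1 / 2 + 3 / p) (τ n)) :
    γ ∈ Tset δ₁ δ₂ ∧ Ep p τ ≤ Ep p γ := by
  obtain rfl : γ = capSeq p τ := funext hγ
  exact ⟨capSeq_mem_Tset (by linarith) hp6 hδ1' hδ2' hτ,
    Ep_le_Ep_capSeq hp4 hp6 hτ.1 hτ.2.1 (Tset.tendsto_atTop hδ2 hτ)⟩

theorem stmt16 (p δ₁ δ₂ : ℝ) (hp4 : 4 ≤ p) (hp6 : p ≤ 6)
    (hδ1 : 0 < δ₁) (hδ1' : δ₁ ≤ 1 / 2 + 3 / p) (hδ2 : 0 < δ₂) (hδ2' : δ₂ ≤ 1)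
    (τ : ℕ → ℝ) (hτ : τ ∈ Tset δ₁ δ₂)
    (γ : ℕ → ℝ) (hγ : ∀ n : ℕ, γ n = min ((n : ℝ) - 1 / 2 + 3 / p) (τ n)) :
    γ ∈ Tset δ₁ δ₂ ∧ Ep p τ ≤ Ep p γ :=
  stmt16_general p δ₁ δ₂ hp4 hp6 hδ1' hδ2 hδ2' τ hτ γ hγ
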